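/- Let M₂ = diag(1/α², 1, 1/μ², 1) with α, μ > 0 and α ≠ μ. The set of 4×4 matrices A of the forms given by Aut(2A₂) satisfying AᵀM₂A = M₂ equals {diag(1, ε₁, 1, ε₂) : ε₁, ε₂ ∈ {±1}}, a group isomorphic to (ℤ/2)². -/

import Mathlib

/-!
Write `d = (1/α², 1, 1/μ², 1)` for the diagonal of `M₂`, so that `(AᵀM₂A)ᵢⱼ = Σₖ dₖ Aₖᵢ Aₖⱼ`.
For an automorphism exchanging the two `A₂` blocks, the diagonal entries `(0,0)` and `(2,2)` read
`1/μ² + a₁₃² = 1/α²` and `1/α² + a₇² = 1/μ²`; adding them gives `a₁₃ = a₇ = 0`, hence `α = μ`.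
For a block-preserving automorphism the entries `(0,0)`, `(2,2)`, `(2,3)` kill the off-diagonal
parameters and `(1,1)`, `(3,3)` force the remaining diagonal entries to be signs. The resulting
matrices `diag(1, ε₁, 1, ε₂)` are the image of the injective homomorphism
`(ℤ/2)² → GL₄(ℝ)`, `(z₁, z₂) ↦ diag(1, (-1)^z₁, 1, (-1)^z₂)`.
-/

open Matrix

/-- The automorphisms of 2A₂ (two allowed shapes). -/
def AutShape (A : Matrix (Fin 4) (Fin 4) ℝ) : Prop :=
  (∃ a₅ a₆ a₁₂ a₁₅ a₁₆ : ℝ,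
      A = !![1, 0, 0, 0; a₅, a₆, 0, 0; 0, 0, 1, a₁₂; 0, 0, a₁₅, a₁₆]) ∨
  (∃ a₇ a₈ a₁₃ a₁₄ : ℝ,
      A = !![0, 0, 1, 0; 0, 0, a₇, a₈; 1, 0, 0, 0; a₁₃, a₁₄, 0, 0])

theorem Matrix.transpose_mul_diagonal_mul_apply {n R : Type*} [Fintype n] [DecidableEq n]
    [CommSemiring R] (A : Matrix n n R) (d : n → R) (i j : n) :
    (Aᵀ * diagonal d * A) i j = ∑ k, d k * A k i * A k j := by
  rw [mul_apply]
  simp only [mul_diagonal, transpose_apply]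
  exact Finset.sum_congr rfl fun k _ => by ring

theorem exists_bijective_mul_of_range_eq {G M : Type*} [Monoid G] [Monoid M] {P : M → Prop}
    (φ : G →* M) (hφ : Function.Injective φ) (hP : ∀ x, P x ↔ x ∈ Set.range φ) :
    ∃ f : {x // P x} → G,
      Function.Bijective f ∧ ∀ a b : {x // P x}, ∃ h, f ⟨a.1 * b.1, h⟩ = f a * f b := by
  let e : G ≃ {x // P x} := Equiv.ofBijective (fun g => ⟨φ g, (hP _).2 ⟨g, rfl⟩⟩)
    ⟨fun g h hgh => hφ (congrArg Subtype.val hgh), fun x => ((hP x).1 x.2).imp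
      fun g hg => Subtype.ext hg⟩
  have e_symm_eq {g : G} {x : {x // P x}} (hx : φ g = x.1) : e.symm x = g :=
    e.symm_apply_eq.2 (Subtype.ext hx.symm)
  refine ⟨e.symm, e.symm.bijective, fun a b => ?_⟩
  obtain ⟨g, hg⟩ := (hP a.1).1 a.2
  obtain ⟨h, hh⟩ := (hP b.1).1 b.2
  have hgh : φ (g * h) = a.1 * b.1 := by rw [map_mul, hg, hh]
  exact ⟨(hP _).2 ⟨g * h, hgh⟩, by rw [e_symm_eq hgh, e_symm_eq hg, e_symm_eq hh]⟩

noncomputable def zmodTwoSign : Multiplicative (ZMod 2) →* ℝ where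
  toFun z := (-1) ^ (Multiplicative.toAdd z).val
  map_one' := pow_zero _
  map_mul' a b := by
    rw [toAdd_mul, ZMod.val_add, ← neg_one_pow_eq_pow_mod_two, pow_add]

theorem zmodTwoSign_ofAdd (z : ZMod 2) :
    zmodTwoSign (Multiplicative.ofAdd z) = (-1) ^ z.val := rfl

theorem zmodTwoSign_injective : Function.Injective zmodTwoSign := by
  simp only [Function.Injective, Multiplicative.forall, zmodTwoSign_ofAdd,
    EmbeddingLike.apply_eq_iff_eq]
  intro a b hab
  apply ZMod.val_injective
  have ha := ZMod.val_lt a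
  have hb := ZMod.val_lt b
  interval_cases a.val <;> interval_cases b.val <;> first | rfl | norm_num at hab

theorem exists_zmodTwoSign_eq_iff {ε : ℝ} : (∃ z, zmodTwoSign z = ε) ↔ ε = 1 ∨ ε = -1 := by
  simp only [Multiplicative.exists, zmodTwoSign_ofAdd]
  constructor
  · rintro ⟨z, rfl⟩
    exact neg_one_pow_eq_or ℝ _
  · rintro (rfl | rfl)
    · exact ⟨0, pow_zero _⟩
    · exact ⟨1, pow_one _⟩

def signDiag (ε₁ ε₂ : ℝ) : Matrix (Fin 4) (Fin 4) ℝ :=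
  !![1, 0, 0, 0; 0, ε₁, 0, 0; 0, 0, 1, 0; 0, 0, 0, ε₂]

theorem signDiag_one_one : signDiag 1 1 = 1 := by
  ext i j
  fin_cases i <;> fin_cases j <;> rfl

theorem signDiag_mul_signDiag (ε₁ ε₂ δ₁ δ₂ : ℝ) :
    signDiag ε₁ ε₂ * signDiag δ₁ δ₂ = signDiag (ε₁ * δ₁) (ε₂ * δ₂) := by
  ext i j
  fin_cases i <;> fin_cases j <;> simp [signDiag, mul_apply, Fin.sum_univ_four]

noncomputable def signDiagHom :
    Multiplicative (ZMod 2) × Multiplicative (ZMod 2) →* Matrix (Fin 4) (Fin 4) ℝ where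
  toFun z := signDiag (zmodTwoSign z.1) (zmodTwoSign z.2)
  map_one' := by rw [Prod.fst_one, Prod.snd_one, map_one, signDiag_one_one]
  map_mul' z w := by
    rw [Prod.fst_mul, Prod.snd_mul, map_mul, map_mul, signDiag_mul_signDiag]

theorem signDiagHom_injective : Function.Injective signDiagHom := by
  intro z w h
  have h₁ : zmodTwoSign z.1 = zmodTwoSign w.1 := congrFun₂ h 1 1
  have h₂ : zmodTwoSign z.2 = zmodTwoSign w.2 := congrFun₂ h 3 3
  exact Prod.ext (zmodTwoSign_injective h₁) (zmodTwoSign_injective h₂)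

theorem mem_range_signDiagHom {A : Matrix (Fin 4) (Fin 4) ℝ} :
    A ∈ Set.range signDiagHom ↔
      ∃ ε₁ ε₂ : ℝ, (ε₁ = 1 ∨ ε₁ = -1) ∧ (ε₂ = 1 ∨ ε₂ = -1) ∧ A = signDiag ε₁ ε₂ := by
  simp only [← exists_zmodTwoSign_eq_iff]
  constructor
  · rintro ⟨z, rfl⟩
    exact ⟨_, _, ⟨z.1, rfl⟩, ⟨z.2, rfl⟩, rfl⟩
  · rintro ⟨_, _, ⟨z₁, rfl⟩, ⟨z₂, rfl⟩, rfl⟩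
    exact ⟨(z₁, z₂), rfl⟩

noncomputable def M₂ (α μ : ℝ) : Matrix (Fin 4) (Fin 4) ℝ :=
  !![1/α^2, 0, 0, 0; 0, 1, 0, 0; 0, 0, 1/μ^2, 0; 0, 0, 0, 1]

section Isometry

variable {α μ : ℝ} {A : Matrix (Fin 4) (Fin 4) ℝ}

theorem M₂_eq_diagonal : M₂ α μ = diagonal ![1/α^2, 1, 1/μ^2, 1] := by
  ext i j
  fin_cases i <;> fin_cases j <;> rfl

theorem transpose_mul_M₂_mul_apply (A : Matrix (Fin 4) (Fin 4) ℝ) (i j : Fin 4) :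
    (Aᵀ * M₂ α μ * A) i j =
      A 0 i * A 0 j / α^2 + A 1 i * A 1 j + A 2 i * A 2 j / μ^2 + A 3 i * A 3 j := by
  rw [M₂_eq_diagonal, transpose_mul_diagonal_mul_apply, Fin.sum_univ_four]
  simp only [Fin.isValue, cons_val]
  ring

theorem isometry_apply (h : Aᵀ * M₂ α μ * A = M₂ α μ) (i j : Fin 4) :
    A 0 i * A 0 j / α^2 + A 1 i * A 1 j + A 2 i * A 2 j / μ^2 + A 3 i * A 3 j = M₂ α μ i j := by
  rw [← transpose_mul_M₂_mul_apply, h]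

theorem signDiag_isometry {ε₁ ε₂ : ℝ} (hε₁ : ε₁ = 1 ∨ ε₁ = -1) (hε₂ : ε₂ = 1 ∨ ε₂ = -1) :
    (signDiag ε₁ ε₂)ᵀ * M₂ α μ * signDiag ε₁ ε₂ = M₂ α μ := by
  have h₁ : ε₁ * ε₁ = 1 := mul_self_eq_one_iff.mpr hε₁
  have h₂ : ε₂ * ε₂ = 1 := mul_self_eq_one_iff.mpr hε₂
  ext i j
  rw [transpose_mul_M₂_mul_apply]
  fin_cases i <;> fin_cases j <;> simp [signDiag, M₂, h₁, h₂]

theorem exists_signDiag_of_isometry_of_blockDiag (hμ : μ ≠ 0) {a₅ a₆ a₁₂ a₁₅ a₁₆ : ℝ}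
    (hA : A = !![1, 0, 0, 0; a₅, a₆, 0, 0; 0, 0, 1, a₁₂; 0, 0, a₁₅, a₁₆])
    (h : Aᵀ * M₂ α μ * A = M₂ α μ) :
    ∃ ε₁ ε₂ : ℝ, (ε₁ = 1 ∨ ε₁ = -1) ∧ (ε₂ = 1 ∨ ε₂ = -1) ∧ A = signDiag ε₁ ε₂ := by
  have h00 := isometry_apply h 0 0
  have h11 := isometry_apply h 1 1
  have h22 := isometry_apply h 2 2
  have h23 := isometry_apply h 2 3
  have h33 := isometry_apply h 3 3
  simp only [hA, M₂, Fin.isValue, of_apply, cons_val', cons_val_zero, cons_val_fin_one, mul_one,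
    one_div, cons_val_one, cons_val, mul_zero, zero_div, add_zero, add_eq_left, mul_eq_zero,
    or_self, zero_add, one_mul] at h00 h11 h22 h23 h33
  have h12 : a₁₂ = 0 := by
    rw [h22, zero_mul, add_zero, div_eq_zero_iff] at h23
    exact h23.resolve_right (pow_ne_zero 2 hμ)
  rw [h12, mul_zero, zero_div, zero_add] at h33
  refine ⟨a₆, a₁₆, mul_self_eq_one_iff.mp h11, mul_self_eq_one_iff.mp h33, ?_⟩
  rw [hA, h00, h12, h22, signDiag]

theorem eq_of_isometry_of_blockAntidiag (hα : 0 < α) (hμ : 0 < μ) {a₇ a₈ a₁₃ a₁₄ : ℝ}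
    (hA : A = !![0, 0, 1, 0; 0, 0, a₇, a₈; 1, 0, 0, 0; a₁₃, a₁₄, 0, 0])
    (h : Aᵀ * M₂ α μ * A = M₂ α μ) : α = μ := by
  have h00 := isometry_apply h 0 0
  have h22 := isometry_apply h 2 2
  simp only [hA, M₂, Fin.isValue, of_apply, cons_val', cons_val_zero, cons_val_fin_one, mul_zero,
    zero_div, cons_val_one, add_zero, cons_val, mul_one, one_div, zero_add] at h00 h22
  have h : (α ^ 2)⁻¹ = (μ ^ 2)⁻¹ := by nlinarith [mul_self_nonneg a₁₃, mul_self_nonneg a₇]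
  rwa [_root_.inv_inj, pow_left_inj₀ hα.le hμ.le two_ne_zero] at h

theorem autShape_and_isometry_iff (hα : 0 < α) (hμ : 0 < μ) (hαμ : α ≠ μ) :
    AutShape A ∧ Aᵀ * M₂ α μ * A = M₂ α μ ↔
      ∃ ε₁ ε₂ : ℝ, (ε₁ = 1 ∨ ε₁ = -1) ∧ (ε₂ = 1 ∨ ε₂ = -1) ∧ A = signDiag ε₁ ε₂ := by
  constructor
  · rintro ⟨⟨_, _, _, _, _, hA⟩ | ⟨_, _, _, _, hA⟩, h⟩
    · exact exists_signDiag_of_isometry_of_blockDiag hμ.ne' hA h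
    · exact absurd (eq_of_isometry_of_blockAntidiag hα hμ hA h) hαμ
  · rintro ⟨ε₁, ε₂, hε₁, hε₂, rfl⟩
    exact ⟨Or.inl ⟨0, ε₁, 0, 0, ε₂, rfl⟩, signDiag_isometry hε₁ hε₂⟩

end Isometry

theorem isometric_automorphisms_M2_G2 (α μ : ℝ) (hα : 0 < α) (hμ : 0 < μ) (hαμ : α ≠ μ) :
    ({A : Matrix (Fin 4) (Fin 4) ℝ |
        AutShape A ∧
        Aᵀ * !![1/α^2, 0, 0, 0; 0, 1, 0, 0; 0, 0, 1/μ^2, 0; 0, 0, 0, (1:ℝ)] * A =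
          !![1/α^2, 0, 0, 0; 0, 1, 0, 0; 0, 0, 1/μ^2, 0; 0, 0, 0, (1:ℝ)]} =
      {A : Matrix (Fin 4) (Fin 4) ℝ | ∃ ε₁ ε₂ : ℝ,
        (ε₁ = 1 ∨ ε₁ = -1) ∧ (ε₂ = 1 ∨ ε₂ = -1) ∧
        A = !![1, 0, 0, 0; 0, ε₁, 0, 0; 0, 0, 1, 0; 0, 0, 0, ε₂]}) ∧
    ∃ f : {A : Matrix (Fin 4) (Fin 4) ℝ //
        AutShape A ∧
        Aᵀ * !![1/α^2, 0, 0, 0; 0, 1, 0, 0; 0, 0, 1/μ^2, 0; 0, 0, 0, (1:ℝ)] * A =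
          !![1/α^2, 0, 0, 0; 0, 1, 0, 0; 0, 0, 1/μ^2, 0; 0, 0, 0, (1:ℝ)]} →
      Multiplicative (ZMod 2) × Multiplicative (ZMod 2),
      Function.Bijective f ∧ ∀ a b, ∃ h, f ⟨a.1 * b.1, h⟩ = f a * f b := by
  have hmem (A : Matrix (Fin 4) (Fin 4) ℝ) :
      AutShape A ∧ Aᵀ * M₂ α μ * A = M₂ α μ ↔ A ∈ Set.range signDiagHom :=
    (autShape_and_isometry_iff hα hμ hαμ).trans mem_range_signDiagHom.symm
  exact ⟨Set.ext fun _ => autShape_and_isometry_iff hα hμ hαμ,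
    exists_bijective_mul_of_range_eq signDiagHom signDiagHom_injective hmem⟩
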